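/- (Common regularity lemma, algebraic core) Let G act transitively on a set X by two actions ρ₁, ρ₂, let Φ₀ and Φ be two (ρ₁,ρ₂)-equivariant bijections X → X, fix x ∈ X with ρ₁-stabilizer H, and assume the normalizer of H (for ρ₂, stabilizers of Φ(x) and Φ₀(x) both being H) equals H·Z(G). Then there exists z₀ ∈ Z(G) such that Φ = ρ₂(z₀) ∘ Φ₀. -/

import Mathlib

open Pointwise

/-!
Both `Φ₀ x` and `Φ x` have `ρ₂`-stabilizer `H`, and the element `g₀` carrying the first to the
second conjugates one stabilizer into the other, so `g₀` normalizes `H` and hence `g₀ = h₀ z₀`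
with `h₀ ∈ H` and `z₀` central. Since `h₀` fixes `Φ₀ x`, the maps `Φ` and `ρ₂ z₀ ∘ Φ₀` agree at
`x`; both are equivariant because `z₀` is central, so they agree on the `ρ₁`-orbit of `x`,
which is all of `X`.
-/

section EquivariantMaps

variable {G X Y : Type*} [Group G] {ρ : G →* Equiv.Perm X} {σ : G →* Equiv.Perm Y}

theorem apply_eq_self_iff_of_equivariant {f : X → Y} (hf : Function.Injective f)
    (hequiv : ∀ g y, f (ρ g y) = σ g (f y)) (g : G) (x : X) :
    σ g (f x) = f x ↔ ρ g x = x := by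
  rw [← hequiv, hf.eq_iff]

theorem equivariant_central_comp {f : X → Y} (hequiv : ∀ g y, f (ρ g y) = σ g (f y))
    {z : G} (hz : z ∈ Subgroup.center G) (g : G) (y : X) :
    σ z (f (ρ g y)) = σ g (σ z (f y)) := by
  rw [hequiv, ← Equiv.Perm.mul_apply, ← Equiv.Perm.mul_apply, ← map_mul, ← map_mul,
    Subgroup.mem_center_iff.mp hz g]

theorem apply_eq_of_equivariant_of_apply_eq {x : X} (htrans : ∀ y, ∃ g, ρ g x = y)
    {f₁ f₂ : X → Y} (hf₁ : ∀ g y, f₁ (ρ g y) = σ g (f₁ y))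
    (hf₂ : ∀ g y, f₂ (ρ g y) = σ g (f₂ y)) (hx : f₁ x = f₂ x) (y : X) : f₁ y = f₂ y := by
  obtain ⟨g, rfl⟩ := htrans y
  rw [hf₁, hf₂, hx]

end EquivariantMaps

theorem Subgroup.mem_normalizer_of_stabilizer_eq {G Y : Type*} [Group G]
    {σ : G →* Equiv.Perm Y} {H : Subgroup G} {a : Y} {g₀ : G}
    (ha : ∀ g, g ∈ H ↔ σ g a = a) (hb : ∀ g, g ∈ H ↔ σ g (σ g₀ a) = σ g₀ a) :
    g₀ ∈ Subgroup.normalizer (H : Set G) := by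
  refine Subgroup.mem_normalizer_iff.mpr fun h => ?_
  rw [ha, hb, map_mul, map_mul, Equiv.Perm.mul_apply, Equiv.Perm.mul_apply, map_inv,
    Equiv.Perm.inv_def, Equiv.symm_apply_apply, (σ g₀).apply_eq_iff_eq]

theorem apply_mul_central_of_apply_eq_self {G Y : Type*} [Group G] (σ : G →* Equiv.Perm Y)
    {a : Y} {h z : G} (hh : σ h a = a) (hz : z ∈ Subgroup.center G) :
    σ (h * z) a = σ z a := by
  rw [Subgroup.mem_center_iff.mp hz h, map_mul, Equiv.Perm.mul_apply, hh]

theorem stmt_10_general {G X : Type*} [Group G] (ρ₁ ρ₂ : G →* Equiv.Perm X)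
    (htrans₁ : ∀ x y : X, ∃ g : G, ρ₁ g x = y)
    (x : X) (H : Subgroup G) (hH : ∀ g : G, g ∈ H ↔ ρ₁ g x = x)
    (hA : (Subgroup.normalizer (H : Set G) : Set G) = (H : Set G) * (Subgroup.center G : Set G))
    (Φ₀ Φ : X ≃ X)
    (hΦ₀ : ∀ (g : G) (y : X), Φ₀ (ρ₁ g y) = ρ₂ g (Φ₀ y))
    (hΦ : ∀ (g : G) (y : X), Φ (ρ₁ g y) = ρ₂ g (Φ y)) :
    ∃ z₀ ∈ Subgroup.center G, ∀ y : X, Φ y = ρ₂ z₀ (Φ₀ y) := by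
  obtain ⟨g₀, hg₀⟩ := htrans₁ x (Φ₀.symm (Φ x))
  have hg₀ : ρ₂ g₀ (Φ₀ x) = Φ x := by rw [← hΦ₀, hg₀, Φ₀.apply_symm_apply]
  have hstab₀ (g : G) : g ∈ H ↔ ρ₂ g (Φ₀ x) = Φ₀ x := by
    rw [hH, apply_eq_self_iff_of_equivariant Φ₀.injective hΦ₀]
  have hN : g₀ ∈ Subgroup.normalizer (H : Set G) :=
    Subgroup.mem_normalizer_of_stabilizer_eq hstab₀ fun g => by
      rw [hg₀, hH, apply_eq_self_iff_of_equivariant Φ.injective hΦ]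
  obtain ⟨h₀, hh₀, z₀, hz₀, rfl⟩ : g₀ ∈ (H : Set G) * (Subgroup.center G : Set G) := hA ▸ hN
  refine ⟨z₀, hz₀, apply_eq_of_equivariant_of_apply_eq (htrans₁ x) hΦ
    (equivariant_central_comp hΦ₀ hz₀) ?_⟩
  rw [← hg₀, apply_mul_central_of_apply_eq_self ρ₂ ((hstab₀ h₀).mp hh₀) hz₀]

/-- Common regularity lemma, algebraic core: under condition (A), two equivariant bijections
between two transitive actions differ by a central element acting via `ρ₂`. -/
theorem stmt_10 {G X : Type*} [Group G] (ρ₁ ρ₂ : G →* Equiv.Perm X)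
    (htrans₁ : ∀ x y : X, ∃ g : G, ρ₁ g x = y)
    (htrans₂ : ∀ x y : X, ∃ g : G, ρ₂ g x = y)
    (x : X) (H : Subgroup G) (hH : ∀ g : G, g ∈ H ↔ ρ₁ g x = x)
    (hA : (Subgroup.normalizer (H : Set G) : Set G) = (H : Set G) * (Subgroup.center G : Set G))
    (Φ₀ Φ : X ≃ X)
    (hΦ₀ : ∀ (g : G) (y : X), Φ₀ (ρ₁ g y) = ρ₂ g (Φ₀ y))
    (hΦ : ∀ (g : G) (y : X), Φ (ρ₁ g y) = ρ₂ g (Φ y)) :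
    ∃ z₀ ∈ Subgroup.center G, ∀ y : X, Φ y = ρ₂ z₀ (Φ₀ y) :=
  stmt_10_general ρ₁ ρ₂ htrans₁ x H hH hA Φ₀ Φ hΦ₀ hΦ
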